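/- Explicit squared-difference formula for the weighted CUSUM of a single-change mean (Lemma A.1, equation (9)). Suppose μ ∈ ℝ^N has a single change at τ on [s,e] with κ = |α − β|. Then for s ≤ b < τ: (W_{s,e}^{μ}(τ))² − (W_{s,e}^{μ}(b))² = (S^w_{(b+1):τ}·S^w_{(τ+1):e}/S^w_{(b+1):e})·κ², and for τ ≤ b < e: (W_{s,e}^{μ}(τ))² − (W_{s,e}^{μ}(b))² = (S^w_{(τ+1):b}·S^w_{s:τ}/S^w_{s:b})·κ². -/
import Mathlib


open MeasureTheory ProbabilityTheory

/-- Cumulative weight `S^w_{u:v} = Σ_{i=u}^{v} w_i`. -/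
noncomputable def Sw (w : ℕ → ℝ) (u v : ℕ) : ℝ := ∑ i ∈ Finset.Icc u v, w i

/-- Weighted inner product `⟨x,y⟩_w = Σ_{i=1}^{N} w_i x_i y_i`. -/
noncomputable def winner (N : ℕ) (w x y : ℕ → ℝ) : ℝ :=
  ∑ i ∈ Finset.Icc 1 N, w i * x i * y i

/-- Weighted norm `‖x‖_w = ⟨x,x⟩_w^{1/2}`. -/
noncomputable def wnorm (N : ℕ) (w x : ℕ → ℝ) : ℝ := Real.sqrt (winner N w x x)

/-- Weighted CUSUM statistic `W_{s,e}^{v}(b)`. -/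
noncomputable def wCUSUM (w v : ℕ → ℝ) (s e b : ℕ) : ℝ :=
  Real.sqrt (Sw w s b * Sw w (b + 1) e / Sw w s e) *
    |(Sw w s b)⁻¹ * ∑ i ∈ Finset.Icc s b, w i * v i
      - (Sw w (b + 1) e)⁻¹ * ∑ i ∈ Finset.Icc (b + 1) e, w i * v i|

/-- The CUSUM contrast vector `ψ_{s,e}^{b}`. -/
noncomputable def psiContrast (w : ℕ → ℝ) (s e b : ℕ) (i : ℕ) : ℝ :=
  if s ≤ i ∧ i ≤ b then Real.sqrt (Sw w (b + 1) e / (Sw w s b * Sw w s e))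
  else if b < i ∧ i ≤ e then -Real.sqrt (Sw w s b / (Sw w s e * Sw w (b + 1) e))
  else 0

/- Auxiliary lemmas -/

lemma sum_Icc_split (f : ℕ → ℝ) {u m v : ℕ} (h1 : u ≤ m + 1) (h2 : m ≤ v) :
    ∑ i ∈ Finset.Icc u v, f i
      = (∑ i ∈ Finset.Icc u m, f i) + ∑ i ∈ Finset.Icc (m + 1) v, f i := by
  rw [← Finset.sum_union]
  · congr 1
    ext i
    simp only [Finset.mem_union, Finset.mem_Icc]
    omega
  · rw [Finset.disjoint_left]
    intro i hi hi'
    simp only [Finset.mem_Icc] at hi hi'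
    omega

lemma Sw_split (w : ℕ → ℝ) {u m v : ℕ} (h1 : u ≤ m + 1) (h2 : m ≤ v) :
    Sw w u v = Sw w u m + Sw w (m + 1) v :=
  sum_Icc_split w h1 h2

lemma Sw_pos (w : ℕ → ℝ) (hw : ∀ i, 0 < w i) {u v : ℕ} (h : u ≤ v) :
    0 < Sw w u v :=
  Finset.sum_pos (fun i _ => hw i) (by simpa [Finset.nonempty_Icc] using h)

lemma sum_const_on {w μ : ℕ → ℝ} {u v : ℕ} {c : ℝ}
    (h : ∀ i, u ≤ i → i ≤ v → μ i = c) :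
    ∑ i ∈ Finset.Icc u v, w i * μ i = Sw w u v * c := by
  rw [Sw, Finset.sum_mul]
  refine Finset.sum_congr rfl fun i hi => ?_
  rw [Finset.mem_Icc] at hi
  rw [h i hi.1 hi.2]

lemma wCUSUM_sq (w v : ℕ → ℝ) (s e b : ℕ)
    (h : 0 ≤ Sw w s b * Sw w (b + 1) e / Sw w s e) :
    (wCUSUM w v s e b) ^ 2
      = (Sw w s b * Sw w (b + 1) e / Sw w s e) *
        ((Sw w s b)⁻¹ * ∑ i ∈ Finset.Icc s b, w i * v i
          - (Sw w (b + 1) e)⁻¹ * ∑ i ∈ Finset.Icc (b + 1) e, w i * v i) ^ 2 := by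
  rw [wCUSUM, mul_pow, sq_abs, Real.sq_sqrt h]

/-- **Explicit squared-difference formula for the weighted CUSUM of a single-change
mean (Lemma A.1, equation (9)).** If `μ` has a single change at `τ` on `[s,e]`
with `κ = |α - β|`, then for `s ≤ b < τ`:
`(W_{s,e}^{μ}(τ))² − (W_{s,e}^{μ}(b))² = (S^w_{(b+1):τ}·S^w_{(τ+1):e}/S^w_{(b+1):e})·κ²`,
and for `τ ≤ b < e`:
`(W_{s,e}^{μ}(τ))² − (W_{s,e}^{μ}(b))² = (S^w_{(τ+1):b}·S^w_{s:τ}/S^w_{s:b})·κ²`. -/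
theorem wcusum_squared_difference_formula
    (N : ℕ) (w : ℕ → ℝ) (hw : ∀ i, 0 < w i)
    (μvec : ℕ → ℝ) (s e τ : ℕ)
    (hs : 1 ≤ s) (hsτ : s ≤ τ) (hτe : τ < e) (heN : e ≤ N)
    (α β : ℝ)
    (hα : ∀ i, s ≤ i → i ≤ τ → μvec i = α)
    (hβ : ∀ i, τ < i → i ≤ e → μvec i = β) :
    (∀ b, s ≤ b → b < τ →
      (wCUSUM w μvec s e τ) ^ 2 - (wCUSUM w μvec s e b) ^ 2
        = (Sw w (b + 1) τ * Sw w (τ + 1) e / Sw w (b + 1) e) * |α - β| ^ 2)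
    ∧ (∀ b, τ ≤ b → b < e →
      (wCUSUM w μvec s e τ) ^ 2 - (wCUSUM w μvec s e b) ^ 2
        = (Sw w (τ + 1) b * Sw w s τ / Sw w s b) * |α - β| ^ 2) := by
  have hSτ : 0 < Sw w s τ := Sw_pos w hw hsτ
  have hQ : 0 < Sw w (τ + 1) e := Sw_pos w hw hτe
  have hSe : 0 < Sw w s e := Sw_pos w hw (le_of_lt (lt_of_le_of_lt hsτ hτe))
  have hSeτ : Sw w s e = Sw w s τ + Sw w (τ + 1) e :=
    Sw_split w (by omega) (le_of_lt hτe)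
  have hsumτ : ∑ i ∈ Finset.Icc s τ, w i * μvec i = Sw w s τ * α := sum_const_on hα
  have hsumQ : ∑ i ∈ Finset.Icc (τ + 1) e, w i * μvec i = Sw w (τ + 1) e * β :=
    sum_const_on fun i h1 h2 => hβ i (by omega) h2
  have hWτ : (wCUSUM w μvec s e τ) ^ 2
      = (Sw w s τ * Sw w (τ + 1) e / Sw w s e) * (α - β) ^ 2 := by
    rw [wCUSUM_sq w μvec s e τ (by positivity), hsumτ, hsumQ,
      inv_mul_cancel_left₀ (ne_of_gt hSτ), inv_mul_cancel_left₀ (ne_of_gt hQ)]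
  rw [sq_abs]
  constructor
  · intro b hsb hbτ
    have hA : 0 < Sw w s b := Sw_pos w hw hsb
    have hP : 0 < Sw w (b + 1) τ := Sw_pos w hw hbτ
    have hB : 0 < Sw w (b + 1) e := Sw_pos w hw (by omega)
    have hsplit1 : Sw w s τ = Sw w s b + Sw w (b + 1) τ :=
      Sw_split w (by omega) (le_of_lt hbτ)
    have hsplit2 : Sw w (b + 1) e = Sw w (b + 1) τ + Sw w (τ + 1) e :=
      Sw_split w (by omega) (le_of_lt hτe)
    have hsumA : ∑ i ∈ Finset.Icc s b, w i * μvec i = Sw w s b * α :=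
      sum_const_on fun i h1 h2 => hα i h1 (by omega)
    have hsumB : ∑ i ∈ Finset.Icc (b + 1) e, w i * μvec i
        = Sw w (b + 1) τ * α + Sw w (τ + 1) e * β := by
      rw [sum_Icc_split (fun i => w i * μvec i) (by omega) (le_of_lt hτe), hsumQ]
      congr 1
      exact sum_const_on fun i h1 h2 => hα i (by omega) h2
    have hWb : (wCUSUM w μvec s e b) ^ 2
        = (Sw w s b * Sw w (b + 1) e / Sw w s e) *
          ((Sw w s b)⁻¹ * (Sw w s b * α)
            - (Sw w (b + 1) e)⁻¹ * (Sw w (b + 1) τ * α + Sw w (τ + 1) e * β)) ^ 2 := by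
      rw [wCUSUM_sq w μvec s e b (by positivity), hsumA, hsumB]
    rw [hWτ, hWb, inv_mul_cancel_left₀ (ne_of_gt hA)]
    rw [hSeτ, hsplit1, hsplit2]
    set a := Sw w s b
    set p := Sw w (b + 1) τ
    set q := Sw w (τ + 1) e
    have h1 : a + p + q ≠ 0 := by positivity
    have h2 : p + q ≠ 0 := by positivity
    field_simp
    ring
  · intro b hτb hbe
    have hA : 0 < Sw w s b := Sw_pos w hw (le_trans hsτ hτb)
    have hB : 0 < Sw w (b + 1) e := Sw_pos w hw hbe
    have hR : 0 ≤ Sw w (τ + 1) b :=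
      Finset.sum_nonneg fun i _ => le_of_lt (hw i)
    have hsplit1 : Sw w s b = Sw w s τ + Sw w (τ + 1) b :=
      Sw_split w (by omega) hτb
    have hsplit2 : Sw w (τ + 1) e = Sw w (τ + 1) b + Sw w (b + 1) e :=
      Sw_split w (by omega) (le_of_lt hbe)
    have hsumA : ∑ i ∈ Finset.Icc s b, w i * μvec i
        = Sw w s τ * α + Sw w (τ + 1) b * β := by
      rw [sum_Icc_split (fun i => w i * μvec i) (by omega) hτb, hsumτ]
      congr 1
      exact sum_const_on fun i h1 h2 => hβ i (by omega) (by omega)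
    have hsumB : ∑ i ∈ Finset.Icc (b + 1) e, w i * μvec i = Sw w (b + 1) e * β :=
      sum_const_on fun i h1 h2 => hβ i (by omega) h2
    have hWb : (wCUSUM w μvec s e b) ^ 2
        = (Sw w s b * Sw w (b + 1) e / Sw w s e) *
          ((Sw w s b)⁻¹ * (Sw w s τ * α + Sw w (τ + 1) b * β)
            - (Sw w (b + 1) e)⁻¹ * (Sw w (b + 1) e * β)) ^ 2 := by
      rw [wCUSUM_sq w μvec s e b (by positivity), hsumA, hsumB]
    rw [hWτ, hWb, inv_mul_cancel_left₀ (ne_of_gt hB)]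
    rw [hSeτ, hsplit1, hsplit2]
    set t := Sw w s τ
    set r := Sw w (τ + 1) b
    set c := Sw w (b + 1) e
    have h1 : t + (r + c) ≠ 0 := by positivity
    have h2 : t + r ≠ 0 := by positivity
    field_simp
    ring
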